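/- arXiv:1010.5079 — 2 statements merged into one kernel-verified Lean document; each statement's English description precedes it below -/
import Mathlib

section
/- For every k ≥ 2 and every positive integer t, R(C^k_{(k+1)t}, C^k_{(k+1)t}) ≥ t(k+1)² − 2k and R(P^k_{(k+1)t}, P^k_{(k+1)t}) ≥ t(k+1)² − 2k. -/
open SimpleGraph Finset

/-- `Embeds H G`: there is a copy of `H` in `G` (injective edge-preserving map). -/
def Embeds {α β : Type*} (H : SimpleGraph α) (G : SimpleGraph β) : Prop :=
  ∃ f : α → β, Function.Injective f ∧ ∀ u v, H.Adj u v → G.Adj (f u) (f v)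

/-- `HomTo H G`: there is a graph homomorphism from `H` to `G`. -/
def HomTo {α β : Type*} (H : SimpleGraph α) (G : SimpleGraph β) : Prop :=
  ∃ f : α → β, ∀ u v, H.Adj u v → G.Adj (f u) (f v)

/-- Every red/blue colouring (given by its red graph `R`) of `K_N`
contains a red copy of `G` or a blue copy of `H`. -/
def RamseyProp {α β : Type*} (G : SimpleGraph α) (H : SimpleGraph β) (N : ℕ) : Prop :=
  ∀ R : SimpleGraph (Fin N), Embeds G R ∨ Embeds H Rᶜ

/-- The Ramsey number `R(G,H)`. -/
noncomputable def ramseyNumber {α β : Type*} (G : SimpleGraph α) (H : SimpleGraph β) : ℕ :=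
  sInf {N | RamseyProp G H N}

/-- `σ(H)`: the minimum size of a colour class in a proper colouring of `H`
with exactly `χ(H)` colours. -/
noncomputable def sigmaH {V : Type*} [Fintype V] (H : SimpleGraph V) : ℕ :=
  sInf { s | ∃ C : H.Coloring (Fin H.chromaticNumber.toNat), ∃ i,
      s = Nat.card {v // C v = i} }

/-- The `k`-th power of the path on `n` vertices. -/
def pathPower (n k : ℕ) : SimpleGraph (Fin n) where
  Adj i j := i ≠ j ∧ Nat.dist i.val j.val ≤ k
  symm := by
    constructor
    intro i j h
    exact ⟨Ne.symm h.1, by rw [Nat.dist_comm]; exact h.2⟩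
  loopless := by
    constructor
    intro i h
    exact h.1 rfl

/-- The `k`-th power of the cycle on `n` vertices. -/
def cyclePower (n k : ℕ) : SimpleGraph (Fin n) where
  Adj i j := i ≠ j ∧ min (Nat.dist i.val j.val) (n - Nat.dist i.val j.val) ≤ k
  symm := by
    constructor
    intro i j h
    refine ⟨Ne.symm h.1, ?_⟩
    rw [Nat.dist_comm]
    exact h.2
  loopless := by
    constructor
    intro i h
    exact h.1 rfl

/-!
Colour the edges of a complete graph on `t(k+1)² - 2k - 1` vertices, split into blocks `A_i` of
size `kt - 1`, `C_i` of size `2t - 1` (`i < k`) and `Y` of size `t - 1`: an edge is red inside an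
`A_i`, between `A_i` and `C_i`, between `C_i` and `C_j` for `i ≠ j`, and between the `C_i` and
`Y`; all other edges are blue. Each `C_i` is red-independent and each `A_i` blue-independent, and
an independent set meets a copy of `P^k_n`, `n = (k+1)t`, in at most `t` vertices.

Every `k + 1` consecutive vertices of `P^k_n` form a clique, and consecutive such windows share `k`
vertices. The red neighbourhood of `A_i` is `A_i ∪ C_i`, and a red clique meets `C_i` at most once,
so fewer than `k` times; the blue neighbourhood of `C_j` is `C_j` together with the `A_l`, `l ≠ j`,
and a blue clique meets those `k - 1` blocks at most `k - 1` times. Hence once a window of a red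
copy meets `A_i` so does the next one, and the copy lies in `A_i ∪ C_i`, with at most `kt - 1 + t`
vertices; likewise a blue copy meeting some `C_j` has at most `2t - 1 + (k-1)t` vertices. A red copy
avoiding all `A_i` lies in the `C_i` and `Y`, a blue copy avoiding all `C_j` in the `A_i` and `Y`,
so it has at most `kt + t - 1` vertices. All these bounds are below `n`, and `C^k_n` contains
`P^k_n`. Ramsey's theorem makes the Ramsey numbers finite, so they exceed the number of vertices of
this colouring.
-/

theorem embeds_iff_isContained {α β : Type*} {H : SimpleGraph α} {G : SimpleGraph β} :
    Embeds H G ↔ H ⊑ G :=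
  ⟨fun ⟨f, hf, hadj⟩ ↦ ⟨⟨⟨f, hadj _ _⟩, hf⟩⟩,
    fun ⟨f⟩ ↦ ⟨f, f.injective, fun _ _ ↦ f.toHom.map_adj⟩⟩

section Ramsey

variable {α β V : Type*} {G : SimpleGraph α} {H : SimpleGraph β}

theorem exists_isNClique_or_isNClique_compl [DecidableEq V] (R : SimpleGraph V)
    [DecidableRel R.Adj] : ∀ (s u : ℕ) (W : Finset V), (s + u).choose s ≤ #W →
      (∃ S ⊆ W, R.IsNClique s S) ∨ ∃ S ⊆ W, Rᶜ.IsNClique u S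
  | 0, _, _, _ => .inl ⟨∅, empty_subset _, by simp⟩
  | _, 0, _, _ => .inr ⟨∅, empty_subset _, by simp⟩
  | s + 1, u + 1, W, hW => by
    obtain ⟨v, hv⟩ : W.Nonempty := card_pos.1 ((Nat.choose_pos (by omega)).trans_le hW)
    set N := (W.erase v).filter (R.Adj v)
    set M := (W.erase v).filter (fun w ↦ ¬R.Adj v w)
    have hNM : #N + #M + 1 = #W := by
      rw [card_filter_add_card_filter_not, card_erase_add_one hv]
    have hpascal : (s + 1 + (u + 1)).choose (s + 1) =
        (s + (u + 1)).choose s + (s + 1 + u).choose (s + 1) := by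
      rw [show s + 1 + (u + 1) = s + (u + 1) + 1 by omega, Nat.choose_succ_succ',
        show s + (u + 1) = s + 1 + u by omega]
    have hN_sub : N ⊆ W := (filter_subset _ _).trans (erase_subset _ _)
    have hM_sub : M ⊆ W := (filter_subset _ _).trans (erase_subset _ _)
    by_cases hN : (s + (u + 1)).choose s ≤ #N
    · rcases exists_isNClique_or_isNClique_compl R s (u + 1) N hN with
        ⟨S, hSN, hS⟩ | ⟨S, hSN, hS⟩
      · refine .inl ⟨insert v S, insert_subset hv (hSN.trans hN_sub), hS.insert fun w hw ↦ ?_⟩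
        exact (mem_filter.1 (hSN hw)).2
      · exact .inr ⟨S, hSN.trans hN_sub, hS⟩
    · rcases exists_isNClique_or_isNClique_compl R (s + 1) u M (by omega) with
        ⟨S, hSM, hS⟩ | ⟨S, hSM, hS⟩
      · exact .inl ⟨S, hSM.trans hM_sub, hS⟩
      · refine .inr ⟨insert v S, insert_subset hv (hSM.trans hM_sub), hS.insert fun w hw ↦ ?_⟩
        obtain ⟨hwv, hvw⟩ := mem_filter.1 (hSM hw)
        exact (compl_adj R v w).2 ⟨(ne_of_mem_erase hwv).symm, hvw⟩

theorem SimpleGraph.IsNClique.isContained {K : SimpleGraph V} {m : ℕ} {S : Finset V}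
    (hS : K.IsNClique m S) (G : SimpleGraph (Fin m)) : G ⊑ K :=
  (IsContained.of_le le_top).trans ((not_cliqueFree_iff_top_isContained m).1 hS.not_cliqueFree)

theorem ramseyProp_choose {m : ℕ} (G H : SimpleGraph (Fin m)) :
    RamseyProp G H ((m + m).choose m) := by
  intro R
  classical
  rcases exists_isNClique_or_isNClique_compl R m m univ (by simp) with ⟨S, -, hS⟩ | ⟨S, -, hS⟩
  · exact .inl (embeds_iff_isContained.2 (hS.isContained G))
  · exact .inr (embeds_iff_isContained.2 (hS.isContained H))

theorem RamseyProp.isContained_or_isContained {N : ℕ} (h : RamseyProp G H N) (e : Fin N ↪ V)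
    (R : SimpleGraph V) : G ⊑ R ∨ H ⊑ Rᶜ := by
  have hR : R.comap e ⊑ R := (Embedding.comap e R).isContained
  have hRc : (R.comap e)ᶜ ⊑ Rᶜ := (Embedding.complEquiv (Embedding.comap e R)).isContained
  rcases h (R.comap e) with h | h
  · exact .inl ((embeds_iff_isContained.1 h).trans hR)
  · exact .inr ((embeds_iff_isContained.1 h).trans hRc)

theorem RamseyProp.mono {N M : ℕ} (h : RamseyProp G H N) (hNM : N ≤ M) : RamseyProp G H M :=
  fun R ↦ (h.isContained_or_isContained (Fin.castLEEmb hNM) R).imp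
    embeds_iff_isContained.2 embeds_iff_isContained.2

theorem not_ramseyProp_card [Fintype V] (R : SimpleGraph V) (hG : ¬G ⊑ R) (hH : ¬H ⊑ Rᶜ) :
    ¬RamseyProp G H (Fintype.card V) := fun h ↦
  (h.isContained_or_isContained (Fintype.equivFin V).symm.toEmbedding R).elim hG hH

theorem lt_ramseyNumber {N M : ℕ} (hM : RamseyProp G H M) (hN : ¬RamseyProp G H N) :
    N < ramseyNumber G H := by
  by_contra! h
  exact hN ((Nat.sInf_mem (s := {N | RamseyProp G H N}) ⟨M, hM⟩).mono h)

end Ramsey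

theorem Nat.forall_le_of_iff_succ {P : ℕ → Prop} {m u₀ : ℕ} (h : ∀ u < m, P u ↔ P (u + 1))
    (hu₀ : u₀ ≤ m) (h₀ : P u₀) : ∀ u ≤ m, P u := by
  have key : ∀ u ≤ m, P u ↔ P 0 := by
    intro u hu
    induction u with
    | zero => rfl
    | succ u ih => exact (h u (by omega)).symm.trans (ih (by omega))
  exact fun u hu ↦ (key u hu).2 ((key u₀ hu₀).1 h₀)

theorem SimpleGraph.IsClique.card_le_of_forall_exists_mem {β ι : Type*} {H : SimpleGraph β}
    {s : Finset β} (hs : H.IsClique (s : Set β)) {I : Finset ι} {X : ι → Set β}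
    (hX : ∀ i ∈ I, H.IsIndepSet (X i)) (hsX : ∀ x ∈ s, ∃ i ∈ I, x ∈ X i) : #s ≤ #I := by
  choose g hgI hgX using hsX
  rw [← card_attach]
  refine card_le_card_of_injOn (fun x ↦ g x x.2) (fun x _ ↦ hgI x x.2) fun x _ y _ hxy ↦ ?_
  by_contra hne
  have hne' : (x : β) ≠ y := fun h ↦ hne (Subtype.ext h)
  have hy : (y : β) ∈ X (g x x.2) := by simpa only [hxy] using hgX y y.2
  exact hX _ (hgI x x.2) (hgX x x.2) hy hne' (hs x.2 y.2 hne')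

section PathPower

variable {β ι : Type*} {n k t : ℕ}

theorem pathPower_le_cyclePower (n k : ℕ) : pathPower n k ≤ cyclePower n k :=
  fun _ _ h ↦ ⟨h.1, (min_le_left _ _).trans h.2⟩

theorem pathPower_adj_of_le {p q : Fin n} (hne : p ≠ q) (hpq : p.val ≤ q + k)
    (hqp : q.val ≤ p + k) : (pathPower n k).Adj p q :=
  ⟨hne, by unfold Nat.dist; omega⟩

theorem SimpleGraph.IsIndepSet.card_le_of_pathPower (hn : n ≤ (k + 1) * t)
    {P : Finset (Fin n)} (hP : (pathPower n k).IsIndepSet (P : Set (Fin n))) : #P ≤ t := by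
  calc #P ≤ #(range t) := by
        refine card_le_card_of_injOn (fun p ↦ p.val / (k + 1))
          (fun p _ ↦ mem_range.2 (Nat.div_lt_of_lt_mul (by omega))) ?_
        intro p hp q hq hpq
        by_contra hne
        have hp' := Nat.div_add_mod p (k + 1)
        have hq' := Nat.div_add_mod q (k + 1)
        have := Nat.mod_lt p (by omega : 0 < k + 1)
        have := Nat.mod_lt q (by omega : 0 < k + 1)
        simp only at hpq
        rw [hpq] at hp'
        exact hP hp hq hne (pathPower_adj_of_le hne (by omega) (by omega))
    _ = t := card_range t

variable {H : SimpleGraph β} (f : Copy (pathPower n k) H) {I : Finset ι} {X : ι → Set β}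

theorem exists_consecutive_mem_of_pathPower_copy (hX : ∀ i ∈ I, H.IsIndepSet (X i))
    (hI : #I < k) {S : Set β} {a : ℕ} (ha : a + k ≤ n)
    (hblock : ∀ p : Fin n, a ≤ p → p < a + k → f p ∈ S ∨ ∃ i ∈ I, f p ∈ X i) :
    ∃ p : Fin n, a ≤ p ∧ p < a + k ∧ f p ∈ S := by
  by_contra! hS
  let g : Fin k ↪ β := ⟨fun i ↦ f ⟨a + i, by omega⟩, fun i j hij ↦ by
    have := congrArg Fin.val (f.injective hij)
    simp only at this
    exact Fin.ext (by omega)⟩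
  have hclique : H.IsClique ((univ.map g : Finset β) : Set β) := by
    simp only [coe_map, coe_univ, Set.image_univ]
    rintro _ ⟨i, rfl⟩ _ ⟨j, rfl⟩ hne
    refine f.toHom.map_adj (pathPower_adj_of_le (fun h ↦ hne (congrArg g (Fin.ext ?_)))
      (by simp; omega) (by simp; omega))
    have := congrArg Fin.val h
    simp only at this
    omega
  have := hclique.card_le_of_forall_exists_mem hX (by
    simp only [mem_map, mem_univ, true_and, forall_exists_index, forall_apply_eq_imp_iff]
    exact fun i ↦ (hblock _ (by simp) (by simp)).resolve_left (hS _ (by simp) (by simp)))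
  simp only [card_map, card_univ, Fintype.card_fin] at this
  omega

/-- A window `[u, u + k]` meeting `S` lies in `S ∪ ⋃ X`, so the `k` positions it shares with
either neighbouring window meet `S` too: the windows meeting `S` are all of them. -/
theorem mem_or_exists_mem_of_pathPower_copy (hkn : k < n) (hX : ∀ i ∈ I, H.IsIndepSet (X i))
    (hI : #I < k) {S : Set β} (hS : ∀ x ∈ S, ∀ y, H.Adj x y → y ∈ S ∨ ∃ i ∈ I, y ∈ X i)
    {p₀ : Fin n} (hp₀ : f p₀ ∈ S) (p : Fin n) : f p ∈ S ∨ ∃ i ∈ I, f p ∈ X i := by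
  set Meets : ℕ → Prop := fun u ↦ ∃ q : Fin n, u ≤ q ∧ q ≤ u + k ∧ f q ∈ S
  have hwindow : ∀ u, Meets u → ∀ q : Fin n, u ≤ q → q ≤ u + k →
      f q ∈ S ∨ ∃ i ∈ I, f q ∈ X i := by
    rintro u ⟨q₀, h₁, h₂, hq₀⟩ q h₃ h₄
    rcases eq_or_ne q₀ q with rfl | hne
    · exact .inl hq₀
    · exact hS _ hq₀ _ (f.toHom.map_adj (pathPower_adj_of_le hne (by omega) (by omega)))
  have hstep : ∀ u < n - 1 - k, Meets u ↔ Meets (u + 1) := by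
    intro u hu
    suffices h : Meets u ∨ Meets (u + 1) → Meets u ∧ Meets (u + 1) from
      ⟨fun hu ↦ (h (.inl hu)).2, fun hu ↦ (h (.inr hu)).1⟩
    intro h
    obtain ⟨q, h₁, h₂, hq⟩ := exists_consecutive_mem_of_pathPower_copy f hX hI (a := u + 1)
      (by omega) fun q h₁ h₂ ↦ h.elim (hwindow u · q (by omega) (by omega))
        (hwindow (u + 1) · q (by omega) (by omega))
    exact ⟨⟨q, by omega, by omega, hq⟩, ⟨q, by omega, by omega, hq⟩⟩
  have hall := Nat.forall_le_of_iff_succ hstep (u₀ := min p₀ (n - 1 - k)) (min_le_right _ _)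
    ⟨p₀, by omega, by omega, hp₀⟩
  exact hwindow _ (hall (min p (n - 1 - k)) (min_le_right _ _)) p (by omega) (by omega)

theorem card_le_of_pathPower_copy (hn : n ≤ (k + 1) * t) (Z : Finset β)
    (hX : ∀ i ∈ I, H.IsIndepSet (X i)) (hcover : ∀ p, f p ∈ Z ∨ ∃ i ∈ I, f p ∈ X i) :
    n ≤ #Z + #I * t := by
  classical
  set PZ : Finset (Fin n) := {p | f p ∈ Z}
  set PX : ι → Finset (Fin n) := fun i ↦ {p | f p ∈ X i}
  have hZ : #PZ ≤ #Z :=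
    card_le_card_of_injOn f (fun p hp ↦ (mem_filter.1 hp).2) f.injective.injOn
  have hXi : ∀ i ∈ I, #(PX i) ≤ t := fun i hi ↦
    IsIndepSet.card_le_of_pathPower hn fun p hp q hq hne hadj ↦
      hX i hi (mem_filter.1 hp).2 (mem_filter.1 hq).2 (f.injective.ne hne) (f.toHom.map_adj hadj)
  calc n = #(univ : Finset (Fin n)) := (card_fin n).symm
    _ ≤ #(PZ ∪ I.biUnion PX) := by
        refine card_le_card fun p _ ↦ ?_
        rcases hcover p with h | ⟨i, hi, h⟩
        · exact mem_union_left _ (mem_filter.2 ⟨mem_univ p, h⟩)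
        · exact mem_union_right _ (mem_biUnion.2 ⟨i, hi, mem_filter.2 ⟨mem_univ p, h⟩⟩)
    _ ≤ #PZ + #(I.biUnion PX) := card_union_le _ _
    _ ≤ #Z + #I * t := add_le_add hZ (card_biUnion_le.trans (sum_le_card_nsmul _ _ _ hXi))

end PathPower

/-- For the red graph `S i = A_i`, `X i = C_i`, `I i = {i}`; for the blue graph `S j = C_j`,
`X i = A_i`, `I j = univ.erase j`. -/
theorem not_pathPower_isContained_of_cores {β ι : Type*} [Fintype ι] {H : SimpleGraph β}
    {n k t : ℕ} (hn : n ≤ (k + 1) * t) (hkn : k < n)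
    (X : ι → Set β) (hX : ∀ i, H.IsIndepSet (X i)) (S : ι → Finset β) (I : ι → Finset ι)
    (hI : ∀ i, #(I i) < k) (hS : ∀ i, ∀ x ∈ S i, ∀ y, H.Adj x y → y ∈ S i ∨ ∃ j ∈ I i, y ∈ X j)
    (hSI : ∀ i, #(S i) + #(I i) * t < n) (Y : Finset β) (hY : #Y + Fintype.card ι * t < n)
    (hcover : ∀ x, x ∈ Y ∨ (∃ i, x ∈ S i) ∨ ∃ i, x ∈ X i) : ¬pathPower n k ⊑ H := by
  rintro ⟨f⟩
  by_cases hcore : ∃ p i, f p ∈ S i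
  · obtain ⟨p₀, i, hp₀⟩ := hcore
    have := card_le_of_pathPower_copy f hn (S i) (fun j _ ↦ hX j)
      (mem_or_exists_mem_of_pathPower_copy f hkn (fun j _ ↦ hX j) (hI i) (hS i) hp₀)
    exact absurd (hSI i) (by omega)
  · simp only [not_exists] at hcore
    have := card_le_of_pathPower_copy f hn Y (I := univ) (fun j _ ↦ hX j) fun p ↦ ?_
    · rw [card_univ] at this
      omega
    rcases hcover (f p) with h | ⟨i, h⟩ | ⟨i, h⟩
    · exact .inl h
    · exact absurd h (hcore p i)
    · exact .inr ⟨i, mem_univ i, h⟩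

theorem card_filter_sigma_fst {ι : Type*} [DecidableEq ι] [Fintype ι] {F : ι → Type*}
    [∀ i, Fintype (F i)] (i : ι) : #{x : Σ i, F i | x.1 = i} = Fintype.card (F i) := by
  rw [← card_univ, ← card_map (Function.Embedding.sigmaMk i)]
  congr 1
  ext ⟨j, r⟩
  simp only [mem_filter, mem_univ, true_and, mem_map, Function.Embedding.sigmaMk_apply]
  constructor
  · rintro rfl
    exact ⟨r, rfl⟩
  · rintro ⟨r', h⟩
    exact (congrArg Sigma.fst h).symm

inductive Block (k : ℕ)
  | a (i : Fin k)
  | c (i : Fin k)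
  | y
  deriving DecidableEq

namespace Block

variable {k : ℕ}

def equivSum : Block k ≃ Fin k ⊕ Fin k ⊕ Unit where
  toFun
    | a i => .inl i
    | c i => .inr (.inl i)
    | y => .inr (.inr ())
  invFun := Sum.elim a (Sum.elim c fun _ ↦ y)
  left_inv b := by cases b <;> rfl
  right_inv s := by rcases s with _ | _ | _ <;> rfl

instance : Fintype (Block k) := Fintype.ofEquiv _ equivSum.symm

theorem sum_univ {M : Type*} [AddCommMonoid M] (g : Block k → M) :
    ∑ b, g b = ∑ i, g (a i) + ∑ i, g (c i) + g y := by
  rw [← equivSum.symm.sum_comp, Fintype.sum_sum_type, Fintype.sum_sum_type, add_assoc]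
  simp [equivSum]

def size (t : ℕ) : Block k → ℕ
  | a _ => k * t - 1
  | c _ => 2 * t - 1
  | y => t - 1

def Red : Block k → Block k → Prop
  | a i, a j => i = j
  | a i, c j | c j, a i => i = j
  | c i, c j => i ≠ j
  | c _, y | y, c _ => True
  | _, _ => False

theorem red_comm {b b' : Block k} : Red b b' ↔ Red b' b := by
  cases b <;> cases b' <;> simp only [Red, eq_comm, ne_comm]

theorem eq_or_eq_of_red {i : Fin k} {b : Block k} (h : Red (a i) b) : b = a i ∨ b = c i := by
  cases b <;> simp_all [Red]

theorem eq_or_exists_of_not_red {j : Fin k} {b : Block k} (h : ¬Red (c j) b) :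
    b = c j ∨ ∃ i ∈ univ.erase j, b = a i := by
  cases b <;> simp_all [Red, eq_comm]

end Block

def redGraph (k t : ℕ) : SimpleGraph (Σ b : Block k, Fin (b.size t)) where
  Adj x y := x ≠ y ∧ x.1.Red y.1
  symm := ⟨fun _ _ h ↦ ⟨h.1.symm, Block.red_comm.1 h.2⟩⟩
  loopless := ⟨fun _ h ↦ h.1 rfl⟩

section RedGraph

variable {k t : ℕ}

theorem card_redGraph_vertices_add_one (ht : 1 ≤ t) :
    Fintype.card (Σ b : Block k, Fin (b.size t)) + 1 = t * (k + 1) ^ 2 - 2 * k := by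
  rw [Fintype.card_sigma, Block.sum_univ]
  simp only [Fintype.card_fin]
  simp only [Block.size, sum_const, card_univ, Fintype.card_fin, smul_eq_mul]
  have hkt : k ≤ k * t := Nat.le_mul_of_pos_right k ht
  have hkkt : k ≤ k * (k * t) := by nlinarith [Nat.le_mul_self k]
  rw [Nat.mul_sub_one, Nat.mul_sub_one, show k * (2 * t) = 2 * (k * t) by ring,
    show t * (k + 1) ^ 2 = k * (k * t) + 2 * (k * t) + t by ring]
  omega

theorem not_pathPower_isContained_redGraph (hk : 2 ≤ k) (ht : 1 ≤ t) :
    ¬pathPower ((k + 1) * t) k ⊑ redGraph k t := by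
  have hkt : 1 ≤ k * t := Nat.one_le_iff_ne_zero.2 (by positivity)
  have hn : (k + 1) * t = k * t + t := by ring
  apply not_pathPower_isContained_of_cores le_rfl (by nlinarith)
    (X := fun i ↦ {x | x.1 = .c i}) (S := fun i ↦ {x | x.1 = .a i}) (I := fun i ↦ {i})
    (Y := {x | x.1 = .y})
  case hX => exact fun i x hx y hy _ hxy ↦ by simp_all [redGraph, Block.Red]
  case hI => exact fun _ ↦ (card_singleton _).trans_lt (by omega)
  case hS =>
    rintro i x hx y ⟨-, hred⟩
    rw [(mem_filter.1 hx).2] at hred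
    simpa using Block.eq_or_eq_of_red hred
  case hSI =>
    intro i
    rw [card_filter_sigma_fst, Fintype.card_fin, card_singleton]
    simp only [Block.size]
    omega
  case hY =>
    rw [card_filter_sigma_fst, Fintype.card_fin, Fintype.card_fin]
    simp only [Block.size]
    omega
  case hcover => exact fun ⟨b, _⟩ ↦ by cases b <;> simp

theorem not_pathPower_isContained_compl_redGraph (hk : 2 ≤ k) (ht : 1 ≤ t) :
    ¬pathPower ((k + 1) * t) k ⊑ (redGraph k t)ᶜ := by
  have hkt : t ≤ k * t := Nat.le_mul_of_pos_left t (by omega)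
  have hn : (k + 1) * t = k * t + t := by ring
  apply not_pathPower_isContained_of_cores le_rfl (by nlinarith)
    (X := fun i ↦ {x | x.1 = .a i}) (S := fun i ↦ {x | x.1 = .c i}) (I := fun i ↦ univ.erase i)
    (Y := {x | x.1 = .y})
  case hX => exact fun i x hx y hy _ hxy ↦ by simp_all [redGraph, Block.Red]
  case hI =>
    intro i
    rw [card_erase_of_mem (mem_univ i), card_univ, Fintype.card_fin]
    omega
  case hS =>
    rintro i x hx y ⟨hne, hnred⟩
    have hred : ¬(Block.c i).Red y.1 := fun h ↦ hnred ⟨hne, (mem_filter.1 hx).2 ▸ h⟩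
    simpa using Block.eq_or_exists_of_not_red hred
  case hSI =>
    intro i
    rw [card_filter_sigma_fst, Fintype.card_fin, card_erase_of_mem (mem_univ i), card_univ,
      Fintype.card_fin, Nat.sub_one_mul]
    simp only [Block.size]
    omega
  case hY =>
    rw [card_filter_sigma_fst, Fintype.card_fin, Fintype.card_fin]
    simp only [Block.size]
    omega
  case hcover => exact fun ⟨b, _⟩ ↦ by cases b <;> simp

end RedGraph

/-- Lower bounds `R(C^k_{(k+1)t}, C^k_{(k+1)t}) ≥ t(k+1)² − 2k` and likewise for paths. -/
theorem ramsey_power_lower (k t : ℕ) (hk : 2 ≤ k) (ht : 1 ≤ t) :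
    t * (k+1)^2 - 2*k ≤
      ramseyNumber (cyclePower ((k+1)*t) k) (cyclePower ((k+1)*t) k) ∧
    t * (k+1)^2 - 2*k ≤
      ramseyNumber (pathPower ((k+1)*t) k) (pathPower ((k+1)*t) k) := by
  have hred := not_pathPower_isContained_redGraph hk ht
  have hblue := not_pathPower_isContained_compl_redGraph hk ht
  have hcycle {V : Type} {H : SimpleGraph V} (h : ¬pathPower ((k + 1) * t) k ⊑ H) :
      ¬cyclePower ((k + 1) * t) k ⊑ H :=
    fun h' ↦ h (h'.mono_left (pathPower_le_cyclePower _ _))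
  rw [← card_redGraph_vertices_add_one ht]
  exact ⟨lt_ramseyNumber (ramseyProp_choose _ _)
      (not_ramseyProp_card _ (hcycle hred) (hcycle hblue)),
    lt_ramseyNumber (ramseyProp_choose _ _) (not_ramseyProp_card _ hred hblue)⟩
end

section
/- Let r ≥ 2 and suppose the edges of K_{2^r+1} are coloured with r colours. Then for some colour i, the subgraph of edges of colour i contains an odd cycle of length at most 2^i + 1. -/
/-!
If the last colour class contains an odd closed walk, it contains an odd cycle, and any cycle
has at most `2^r + 1` vertices. Otherwise the last colour class is bipartite, so one side of a
bipartition has `2^(r-1) + 1` vertices, all of whose edges use the first `r - 1` colours, and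
induction applies to that side.
-/

open SimpleGraph Finset

namespace SimpleGraph

variable {V W : Type*} {G : SimpleGraph V}

def HasOddCycleOfLengthAtMost (G : SimpleGraph V) (n : ℕ) : Prop :=
  ∃ (x : V) (c : G.Walk x x), c.IsCycle ∧ Odd c.length ∧ c.length ≤ n

lemma HasOddCycleOfLengthAtMost.mono {m n : ℕ} (h : G.HasOddCycleOfLengthAtMost m)
    (hmn : m ≤ n) : G.HasOddCycleOfLengthAtMost n := by
  obtain ⟨x, c, hc, hodd, hle⟩ := h
  exact ⟨x, c, hc, hodd, hle.trans hmn⟩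

lemma HasOddCycleOfLengthAtMost.map {H : SimpleGraph W} (f : G ↪g H) {n : ℕ}
    (h : G.HasOddCycleOfLengthAtMost n) : H.HasOddCycleOfLengthAtMost n := by
  obtain ⟨x, c, hc, hodd, hle⟩ := h
  exact ⟨f x, c.map f.toHom, hc.map f.injective, by rwa [Walk.length_map],
    by rwa [Walk.length_map]⟩

namespace Walk

lemma three_le_length_of_odd {x : V} (w : G.Walk x x) (hw : Odd w.length) : 3 ≤ w.length := by
  obtain ⟨k, hk⟩ := hw
  rcases k with _ | k
  · exact absurd (w.adj_of_length_eq_one hk) (G.loopless.irrefl x)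
  · omega

lemma hasOddCycleOfLengthAtMost_length_of_odd {x : V} (w : G.Walk x x) (hw : Odd w.length) :
    G.HasOddCycleOfLengthAtMost w.length := by
  induction hn : w.length using Nat.strong_induction_on generalizing x with
  | _ n ih =>
  by_cases htail : w.tail.IsPath
  · exact ⟨x, w, isCycle_iff_isPath_tail_and_le_length.mpr
      ⟨htail, w.three_le_length_of_odd hw⟩, hn ▸ hw, hn.le⟩
  obtain ⟨y, c, hsub, hc⟩ : ∃ (y : V) (c : G.Walk y y), c.IsSubwalk w.tail ∧ ¬ c.Nil := by
    simpa [isPath_iff_isSubwalk_imp_nil] using htail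
  have hc_lt : c.length < n := by
    have := length_le_of_isSubwalk hsub
    rw [length_tail] at this
    have := hw.pos
    omega
  have hc_pos : 0 < c.length := not_nil_iff_lt_length.mp hc
  obtain ⟨p, q, hw_eq⟩ := hsub.trans (isSubwalk_rfl w).tail
  have hlen : (p.append q).length + c.length = n := by
    rw [← hn, hw_eq]
    simp only [length_append]
    omega
  -- cutting `c` out of `w` leaves the closed walk `p.append q`, and one of the two is odd
  rcases Nat.even_or_odd c.length with hc_even | hc_odd
  · have hn_odd : Odd ((p.append q).length + c.length) := hlen ▸ hn ▸ hw
    exact (ih _ (by omega) (p.append q) ((Nat.odd_add.mp hn_odd).mpr hc_even) rfl).mono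
      (by omega)
  · exact (ih _ hc_lt c hc_odd rfl).mono hc_lt.le

lemma IsCycle.length_le_card [Fintype V] {x : V} {c : G.Walk x x} (hc : c.IsCycle) :
    c.length ≤ Fintype.card V := by
  have := hc.isPath_tail.length_lt
  rw [length_tail] at this
  omega

end Walk

lemma hasOddCycleOfLengthAtMost_card_of_not_colorable_two [Fintype V] (h : ¬ G.Colorable 2) :
    G.HasOddCycleOfLengthAtMost (Fintype.card V) := by
  obtain ⟨x, w, hw⟩ : ∃ (x : V) (w : G.Walk x x), Odd w.length := by
    simpa [two_colorable_iff_forall_loop_even] using h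
  obtain ⟨y, c, hc, hodd, -⟩ := w.hasOddCycleOfLengthAtMost_length_of_odd hw
  exact ⟨y, c, hc, hodd, hc.length_le_card⟩

lemma Colorable.exists_isIndepSet_card_eq [Fintype V] {k n : ℕ} (hG : G.Colorable k)
    (hn : k * n < Fintype.card V) : ∃ t : Finset V, G.IsIndepSet t ∧ #t = n + 1 := by
  classical
  obtain ⟨C⟩ := hG
  obtain ⟨i, hi⟩ := Fintype.exists_lt_card_fiber_of_mul_lt_card C (by simpa using hn)
  obtain ⟨t, hts, ht⟩ := Finset.exists_subset_card_eq hi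
  exact ⟨t, (C.isIndepSet_colorClass i).mono fun v hv => (mem_filter.mp (hts hv)).2, ht⟩

theorem exists_hasOddCycleOfLengthAtMost_of_forall_adj [Fintype V] (r : ℕ)
    (G : Fin r → SimpleGraph V) (hG : ∀ u v, u ≠ v → ∃ i, (G i).Adj u v)
    (hV : Fintype.card V = 2 ^ r + 1) :
    ∃ i, (G i).HasOddCycleOfLengthAtMost (2 ^ (i.val + 1) + 1) := by
  induction r generalizing V with
  | zero =>
    obtain ⟨u, v, huv⟩ := Fintype.exists_pair_of_one_lt_card (by omega : 1 < Fintype.card V)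
    exact (hG u v huv).elim fun i _ => i.elim0
  | succ r ih =>
    by_cases hlast : (G (Fin.last r)).Colorable 2
    · obtain ⟨t, ht, hcard⟩ := hlast.exists_isIndepSet_card_eq (n := 2 ^ r)
        (by rw [hV, pow_succ]; omega)
      have hG_t : ∀ u v : (t : Set V), u ≠ v → ∃ i : Fin r, (G i.castSucc).Adj u v := by
        intro u v huv
        obtain ⟨j, hj⟩ := hG u v (Subtype.coe_ne_coe.mpr huv)
        obtain ⟨i, rfl⟩ := Fin.exists_castSucc_eq.mpr
          fun hj_last => ht u.2 v.2 (Subtype.coe_ne_coe.mpr huv) (hj_last ▸ hj)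
        exact ⟨i, hj⟩
      obtain ⟨i, hi⟩ := ih (fun i => (G i.castSucc).induce t) hG_t (by simpa using hcard)
      exact ⟨i.castSucc, hi.map (Embedding.induce _)⟩
    · exact ⟨Fin.last r, (hasOddCycleOfLengthAtMost_card_of_not_colorable_two hlast).mono
        (by simp [hV, pow_succ])⟩

end SimpleGraph

/-- Colour `i : Fin r` is colour `i + 1` of the colours `1, …, r`, hence the bound
`2 ^ (i + 1) + 1`. -/
theorem short_odd_cycle_in_colouring_general (r : ℕ)
    (col : Fin (2^r + 1) → Fin (2^r + 1) → Fin r) :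
    ∃ (i : Fin r) (x : Fin (2^r + 1))
      (w : (SimpleGraph.fromRel fun u v => col u v = i).Walk x x),
      w.IsCycle ∧ Odd w.length ∧ w.length ≤ 2 ^ (i.val + 1) + 1 := by
  obtain ⟨i, x, w, hw⟩ := exists_hasOddCycleOfLengthAtMost_of_forall_adj r
    (fun i => SimpleGraph.fromRel fun u v => col u v = i)
    (fun u v huv => ⟨col u v, (fromRel_adj _ _ _).mpr ⟨huv, Or.inl rfl⟩⟩) (Fintype.card_fin _)
  exact ⟨i, x, w, hw⟩

/-- In any `r`-colouring of `K_{2^r+1}`, some colour `i` contains an odd cycle of length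
at most `2^i + 1` (colours indexed `1,…,r`; here `i : Fin r` corresponds to colour `i+1`). -/
theorem short_odd_cycle_in_colouring (r : ℕ) (hr : 2 ≤ r)
    (col : Fin (2^r + 1) → Fin (2^r + 1) → Fin r)
    (hsym : ∀ u v, col u v = col v u) :
    ∃ (i : Fin r) (x : Fin (2^r + 1))
      (w : (SimpleGraph.fromRel fun u v => col u v = i).Walk x x),
      w.IsCycle ∧ Odd w.length ∧ w.length ≤ 2 ^ (i.val + 1) + 1 :=
  short_odd_cycle_in_colouring_general r col
end
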